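/- Under the hypotheses of the preceding water-filling optimality statement (p strictly decreasing and positive, B > 0, S ≤ MB, index m₁ with S′ = S − (m₁−1)B > 0, t = S′/∑_{j=m₁}^M √p_j, t√p_{m₁} ≤ B, and m₁ = 1 or t√p_{m₁−1} ≥ B), the minimum value of ∑_{m=1}^M p_m/x_m over { x : 0 < x_m ≤ B, ∑_m x_m ≤ S } equals (1/B)·∑_{m=1}^{m₁−1} p_m + (∑_{m=m₁}^M √p_m)² / S′. -/

import Mathlib

/-!
The objective `x ↦ ∑ p_m / x_m` is convex, so the water-filling allocation `x̂` is optimal once it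
satisfies the KKT conditions with multiplier `λ = 1 / t²`: on the tail `x̂_m = t √p_m`, so the
marginal cost `p_m / x̂_m²` equals `λ`; on the head `x̂_m = B` and the threshold condition
`B ≤ t √p_{m₁-1}` (with `p` decreasing) gives `p_m / B² ≥ λ`. Summing the tangent-line bounds
`p / a ≥ p / b + (p / b²) (b - a)` at `b = x̂_m` turns this into
`∑ p_m / x_m ≥ ∑ p_m / x̂_m + λ (∑ x̂_m - ∑ x_m) ≥ ∑ p_m / x̂_m`.
-/

open Finset

lemma div_add_div_sq_mul_sub_le_div {c a b : ℝ} (hc : 0 ≤ c) (ha : 0 < a) (hb : 0 < b) :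
    c / b + c / b ^ 2 * (b - a) ≤ c / a := by
  have key : c / a - (c / b + c / b ^ 2 * (b - a)) = c * (a - b) ^ 2 / (a * b ^ 2) := by
    field_simp
    ring
  have : 0 ≤ c * (a - b) ^ 2 / (a * b ^ 2) := by positivity
  linarith

/-- Weak duality for minimizing `∑ p i / x i` under a budget constraint. -/
lemma sum_div_le_sum_div_of_kkt {ι : Type*} {s : Finset ι} {p x y : ι → ℝ} {lam : ℝ}
    (hlam : 0 ≤ lam) (hp : ∀ i ∈ s, 0 ≤ p i) (hx : ∀ i ∈ s, 0 < x i) (hy : ∀ i ∈ s, 0 < y i)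
    (hbudget : ∑ i ∈ s, x i ≤ ∑ i ∈ s, y i)
    (hkkt : ∀ i ∈ s, lam * (y i - x i) ≤ p i / y i ^ 2 * (y i - x i)) :
    ∑ i ∈ s, p i / y i ≤ ∑ i ∈ s, p i / x i :=
  calc ∑ i ∈ s, p i / y i
      ≤ ∑ i ∈ s, p i / y i + lam * (∑ i ∈ s, y i - ∑ i ∈ s, x i) := by
        have : 0 ≤ lam * (∑ i ∈ s, y i - ∑ i ∈ s, x i) := mul_nonneg hlam (by linarith)
        linarith
    _ = ∑ i ∈ s, (p i / y i + lam * (y i - x i)) := by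
        rw [sum_add_distrib, ← sum_sub_distrib, mul_sum]
    _ ≤ ∑ i ∈ s, (p i / y i + p i / y i ^ 2 * (y i - x i)) :=
        sum_le_sum fun i hi => by linarith [hkkt i hi]
    _ ≤ ∑ i ∈ s, p i / x i :=
        sum_le_sum fun i hi => div_add_div_sq_mul_sub_le_div (hp i hi) (hx i hi) (hy i hi)

lemma sum_Icc_one_eq_add {α : Type*} [AddCommMonoid α] (f : ℕ → α) {k M : ℕ} (hk : k ≤ M) :
    ∑ m ∈ Icc 1 M, f m = ∑ m ∈ Icc 1 k, f m + ∑ m ∈ Icc (k + 1) M, f m := by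
  have h := sum_Ioc_consecutive f (Nat.zero_le k) hk
  rw [← Icc_add_one_left_eq_Ioc, ← Icc_add_one_left_eq_Ioc, ← Icc_add_one_left_eq_Ioc,
    zero_add] at h
  exact h.symm

/-- The allocation `x̂` of the paper, with `k = m₁ - 1`. -/
noncomputable def waterfill (B t : ℝ) (p : ℕ → ℝ) (k m : ℕ) : ℝ :=
  if m ≤ k then B else t * √(p m)

section Waterfill

variable {B t : ℝ} {p : ℕ → ℝ} {k M : ℕ}

lemma sum_waterfill (hk : k ≤ M) :
    ∑ m ∈ Icc 1 M, waterfill B t p k m = k * B + t * ∑ m ∈ Icc (k + 1) M, √(p m) := by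
  rw [sum_Icc_one_eq_add _ hk, mul_sum]
  congr 1
  · rw [sum_congr rfl fun m hm => by rw [waterfill, if_pos (mem_Icc.1 hm).2]]
    simp
  · exact sum_congr rfl fun m hm => if_neg (by grind)

lemma sum_div_waterfill (hk : k ≤ M) :
    ∑ m ∈ Icc 1 M, p m / waterfill B t p k m =
      1 / B * ∑ m ∈ Icc 1 k, p m + (∑ m ∈ Icc (k + 1) M, √(p m)) / t := by
  rw [sum_Icc_one_eq_add _ hk, mul_sum, sum_div]
  congr 1
  · refine sum_congr rfl fun m hm => ?_
    rw [waterfill, if_pos (mem_Icc.1 hm).2]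
    ring
  · refine sum_congr rfl fun m hm => ?_
    rw [waterfill, if_neg (by grind), mul_comm, ← div_div, Real.div_sqrt]

lemma waterfill_mem_Ioc (hp : ∀ m, 1 ≤ m → m ≤ M → 0 < p m) (hanti : AntitoneOn p (Set.Icc 1 M))
    (hB : 0 < B) (ht : 0 < t) (hcap : t * √(p (k + 1)) ≤ B) {m : ℕ} (h1 : 1 ≤ m) (h2 : m ≤ M) :
    waterfill B t p k m ∈ Set.Ioc 0 B := by
  unfold waterfill
  split_ifs with hmk
  · exact ⟨hB, le_rfl⟩
  · refine ⟨mul_pos ht (Real.sqrt_pos.2 (hp m h1 h2)), le_trans ?_ hcap⟩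
    gcongr
    exact hanti ⟨by omega, by omega⟩ ⟨h1, h2⟩ (by omega)

lemma waterfill_kkt (hp : ∀ m, 1 ≤ m → m ≤ M → 0 < p m) (hanti : AntitoneOn p (Set.Icc 1 M))
    (hkM : k ≤ M) (hB : 0 < B) (ht : 0 < t) (hlow : k = 0 ∨ B ≤ t * √(p k)) {m : ℕ} (h1 : 1 ≤ m)
    (h2 : m ≤ M) {x : ℝ} (hx : x ≤ B) :
    1 / t ^ 2 * (waterfill B t p k m - x) ≤
      p m / waterfill B t p k m ^ 2 * (waterfill B t p k m - x) := by
  have hpm := hp m h1 h2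
  unfold waterfill
  split_ifs with hmk
  · refine mul_le_mul_of_nonneg_right ?_ (by linarith)
    have hBle : B ≤ t * √(p m) := by
      obtain rfl | hk := hlow
      · omega
      · exact hk.trans (by gcongr; exact hanti ⟨h1, by omega⟩ ⟨by omega, by omega⟩ hmk)
    rw [div_le_div_iff₀ (by positivity) (by positivity), one_mul]
    calc B ^ 2 ≤ (t * √(p m)) ^ 2 := by gcongr
      _ = p m * t ^ 2 := by rw [mul_pow, Real.sq_sqrt hpm.le, mul_comm]
  · rw [mul_pow, Real.sq_sqrt hpm.le, div_mul_cancel_right₀ hpm.ne', one_div]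

end Waterfill

theorem two_part_waterfilling_min_value_general (M : ℕ)
    (p : ℕ → ℝ) (hp : ∀ m, 1 ≤ m → m ≤ M → 0 < p m)
    (hdec : ∀ i j, 1 ≤ i → i < j → j ≤ M → p j < p i)
    (B S : ℝ) (hB : 0 < B)
    (m₁ : ℕ) (hm₁l : 1 ≤ m₁) (hm₁u : m₁ ≤ M)
    (S' t : ℝ)
    (hS'def : S' = S - ((m₁ - 1 : ℕ) : ℝ) * B)
    (htdef : t = S' / ∑ j ∈ Finset.Icc m₁ M, Real.sqrt (p j))
    (hS'pos : 0 < S')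
    (hcap : t * Real.sqrt (p m₁) ≤ B)
    (hlow : m₁ = 1 ∨ B ≤ t * Real.sqrt (p (m₁ - 1))) :
    IsLeast { y : ℝ | ∃ x : ℕ → ℝ, (∀ m, 1 ≤ m → m ≤ M → 0 < x m ∧ x m ≤ B) ∧
        ∑ m ∈ Finset.Icc 1 M, x m ≤ S ∧ y = ∑ m ∈ Finset.Icc 1 M, p m / x m }
      ((1 / B) * ∑ m ∈ Finset.Icc 1 (m₁ - 1), p m +
        (∑ m ∈ Finset.Icc m₁ M, Real.sqrt (p m)) ^ 2 / S') := by
  obtain ⟨k, rfl⟩ : ∃ k, m₁ = k + 1 := ⟨m₁ - 1, by omega⟩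
  rw [Nat.add_sub_cancel] at hS'def hlow ⊢
  replace hlow : k = 0 ∨ B ≤ t * √(p k) := hlow.imp_left (by omega)
  have hkM : k ≤ M := by omega
  have hanti : AntitoneOn p (Set.Icc 1 M) :=
    StrictAntiOn.antitoneOn fun i hi j hj hij => hdec i j hi.1 hij hj.2
  set Q := ∑ j ∈ Icc (k + 1) M, √(p j) with hQdef
  have hQ : 0 < Q := sum_pos' (fun _ _ => Real.sqrt_nonneg _)
    ⟨k + 1, mem_Icc.2 ⟨le_rfl, hm₁u⟩, Real.sqrt_pos.2 (hp _ (by omega) hm₁u)⟩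
  have ht : 0 < t := htdef ▸ div_pos hS'pos hQ
  have htQ : t * Q = S' := by rw [htdef, div_mul_cancel₀ _ hQ.ne']
  have hsum : ∑ m ∈ Icc 1 M, waterfill B t p k m = S := by
    rw [sum_waterfill hkM, htQ, hS'def]
    ring
  have hval :
      ∑ m ∈ Icc 1 M, p m / waterfill B t p k m = 1 / B * ∑ m ∈ Icc 1 k, p m + Q ^ 2 / S' := by
    rw [sum_div_waterfill hkM, ← hQdef, ← htQ]
    field_simp
  have hmem : ∀ m, 1 ≤ m → m ≤ M → waterfill B t p k m ∈ Set.Ioc 0 B :=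
    fun _ => waterfill_mem_Ioc hp hanti hB ht hcap
  refine ⟨⟨waterfill B t p k, hmem, hsum.le, hval.symm⟩, ?_⟩
  rintro y ⟨x, hx, hxS, rfl⟩
  rw [← hval]
  refine sum_div_le_sum_div_of_kkt (lam := 1 / t ^ 2) (by positivity) ?_ ?_ ?_ (hsum ▸ hxS) ?_ <;>
    intro m hm <;> obtain ⟨h1, h2⟩ := mem_Icc.1 hm
  · exact (hp m h1 h2).le
  · exact (hx m h1 h2).1
  · exact (hmem m h1 h2).1
  · exact waterfill_kkt hp hanti hkM hB ht hlow h1 h2 (hx m h1 h2).2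

/-- Theorem 2 (exact value, eq. (E.1)): under the KKT threshold conditions, the
minimum of `∑ p_m / x_m` over `{0 < x_m ≤ B, ∑ x_m ≤ S}` equals
`(1/B) ∑_{m<m₁} p_m + (∑_{m≥m₁} √p_m)² / S'`. -/
theorem two_part_waterfilling_min_value (M : ℕ) (hM : 1 ≤ M)
    (p : ℕ → ℝ) (hp : ∀ m, 1 ≤ m → m ≤ M → 0 < p m)
    (hdec : ∀ i j, 1 ≤ i → i < j → j ≤ M → p j < p i)
    (B S : ℝ) (hB : 0 < B) (hS : 0 < S) (hSMB : S ≤ M * B)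
    (m₁ : ℕ) (hm₁l : 1 ≤ m₁) (hm₁u : m₁ ≤ M)
    (S' t : ℝ)
    (hS'def : S' = S - ((m₁ - 1 : ℕ) : ℝ) * B)
    (htdef : t = S' / ∑ j ∈ Finset.Icc m₁ M, Real.sqrt (p j))
    (hS'pos : 0 < S')
    (hcap : t * Real.sqrt (p m₁) ≤ B)
    (hlow : m₁ = 1 ∨ B ≤ t * Real.sqrt (p (m₁ - 1))) :
    IsLeast { y : ℝ | ∃ x : ℕ → ℝ, (∀ m, 1 ≤ m → m ≤ M → 0 < x m ∧ x m ≤ B) ∧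
        ∑ m ∈ Finset.Icc 1 M, x m ≤ S ∧ y = ∑ m ∈ Finset.Icc 1 M, p m / x m }
      ((1 / B) * ∑ m ∈ Finset.Icc 1 (m₁ - 1), p m +
        (∑ m ∈ Finset.Icc m₁ M, Real.sqrt (p m)) ^ 2 / S') :=
  two_part_waterfilling_min_value_general M p hp hdec B S hB m₁ hm₁l hm₁u S' t hS'def htdef hS'pos
    hcap hlow
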